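/- arXiv:1110.0321 — 8 statements merged into one kernel-verified Lean document; each statement's English description precedes it below -/
import Mathlib

section
/- (Goodstein's theorem, existence direction) Let L be a bounded distributive lattice and f: {0,1}^n → L a monotone function (with respect to the componentwise order on {0,1}^n ⊆ L^n). Then the lattice polynomial function p(x) = ⋁_{I ⊆ [n]} (f(1_I) ∧ ⋀_{i∈I} x_i) satisfies p(1_J) = f(1_J) for all J ⊆ [n], where 1_I is the characteristic vector of I. -/
/-- Goodstein, existence: for monotone `f : {0,1}^n → L` (encoded as
`f : Finset (Fin n) → L` via `I ↦ 1_I`), the polynomial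
`p(x) = ⋁_I (f(1_I) ∧ ⋀_{i∈I} x_i)` interpolates `f` on all characteristic vectors. -/
theorem stmt_2 {n : ℕ} {L : Type*} [DistribLattice L] [BoundedOrder L]
    (f : Finset (Fin n) → L) (hf : ∀ I J : Finset (Fin n), I ⊆ J → f I ≤ f J)
    (J : Finset (Fin n)) :
    (Finset.univ.powerset).sup
        (fun I : Finset (Fin n) =>
          f I ⊓ I.inf (fun i => if i ∈ J then (⊤ : L) else ⊥)) = f J := by
  apply le_antisymm
  · apply Finset.sup_le
    intro I _
    by_cases h : I ⊆ J
    · refine le_trans inf_le_left (hf I J h)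
    · obtain ⟨i, hiI, hiJ⟩ := Finset.not_subset.mp h
      calc f I ⊓ I.inf (fun i => if i ∈ J then (⊤ : L) else ⊥)
          ≤ I.inf (fun i => if i ∈ J then (⊤ : L) else ⊥) := inf_le_right
        _ ≤ (if i ∈ J then (⊤ : L) else ⊥) := Finset.inf_le hiI
        _ = ⊥ := if_neg hiJ
        _ ≤ f J := bot_le
  · have : f J = f J ⊓ J.inf (fun i => if i ∈ J then (⊤ : L) else ⊥) := by
      rw [Finset.inf_congr rfl (fun i hi => if_pos hi), Finset.inf_top, inf_top_eq]
    rw [this]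
    exact Finset.le_sup (f := fun I : Finset (Fin n) => f I ⊓ I.inf fun i => if i ∈ J then (⊤ : L) else ⊥) (Finset.mem_powerset.mpr (Finset.subset_univ J))
end

section
/- (Goodstein's theorem, uniqueness) Let L be a bounded distributive lattice and let p, q: L^n → L be lattice polynomial functions given in DNF with monotone coefficient systems. If p(1_I) = q(1_I) for every I ⊆ [n], then p = q. -/
/-! Monotonicity of the coefficients makes `p(1_I) = c_I`: the term of `K` vanishes at `1_I`
unless `K ⊆ I`, and is then at most `c_K ≤ c_I`. So `p` and `q` have the same coefficients. -/

def charVec {n : ℕ} (L : Type*) [Preorder L] [BoundedOrder L] (I : Finset (Fin n)) :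
    Fin n → L := fun i => if i ∈ I then ⊤ else ⊥

section charVec

variable {n : ℕ} {L : Type*} [Lattice L] [BoundedOrder L]

lemma Finset.inf_charVec_of_subset {K I : Finset (Fin n)} (hKI : K ⊆ I) :
    K.inf (charVec L I) = ⊤ :=
  (Finset.inf_eq_top_iff _ _).mpr fun _ hi => if_pos (hKI hi)

lemma Finset.inf_charVec_of_not_subset {K I : Finset (Fin n)} (hKI : ¬K ⊆ I) :
    K.inf (charVec L I) = ⊥ := by
  obtain ⟨i, hiK, hiI⟩ := Finset.not_subset.mp hKI
  exact le_bot_iff.mp ((Finset.inf_le hiK).trans_eq (if_neg hiI))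

lemma Monotone.sup_inf_inf_charVec {c : Finset (Fin n) → L} (hc : Monotone c)
    (I : Finset (Fin n)) :
    (Finset.univ.powerset).sup (fun K => c K ⊓ K.inf (charVec L I)) = c I := by
  apply le_antisymm
  · refine Finset.sup_le fun K _ => ?_
    by_cases hKI : K ⊆ I
    · exact inf_le_left.trans (hc hKI)
    · simp [Finset.inf_charVec_of_not_subset hKI]
  · refine le_trans ?_ (Finset.le_sup (Finset.mem_powerset.mpr I.subset_univ))
    simp [Finset.inf_charVec_of_subset (subset_refl I)]

end charVec

/-- Goodstein, uniqueness: two DNF polynomial functions with monotone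
coefficient systems agreeing on all characteristic vectors are equal. -/
theorem stmt_3 {n : ℕ} {L : Type*} [DistribLattice L] [BoundedOrder L]
    (c d : Finset (Fin n) → L)
    (hc : ∀ I J : Finset (Fin n), I ⊆ J → c I ≤ c J)
    (hd : ∀ I J : Finset (Fin n), I ⊆ J → d I ≤ d J)
    (h : ∀ I : Finset (Fin n),
      (Finset.univ.powerset).sup (fun K : Finset (Fin n) => c K ⊓ K.inf (charVec L I)) =
        (Finset.univ.powerset).sup (fun K : Finset (Fin n) => d K ⊓ K.inf (charVec L I))) :
    ∀ x : Fin n → L,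
      (Finset.univ.powerset).sup (fun K : Finset (Fin n) => c K ⊓ K.inf x) =
        (Finset.univ.powerset).sup (fun K : Finset (Fin n) => d K ⊓ K.inf x) := by
  have hcd : c = d := funext fun I => by
    rw [← (show Monotone c from fun I J => hc I J).sup_inf_inf_charVec I,
      ← (show Monotone d from fun I J => hd I J).sup_inf_inf_charVec I, h I]
  intro x
  rw [hcd]
end

section
/- Let L be the lattice of open subsets of a topological space X, and let a, b ∈ L with a ⊂ b (strict inclusion). For c_0, c_1 ∈ L with c_0 ⊆ c_1, the unary polynomial function p(x) = c_0 ∪ (c_1 ∩ x) satisfies p(a) = p(b) = b if and only if b \ a ⊆ c_0 ⊆ b and b ⊆ c_1 ⊆ X. -/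
open TopologicalSpace

/-- in the lattice of open sets of a topological space `X`, for `a ⊂ b`
and `c₀ ⊆ c₁`, the unary polynomial `p(x) = c₀ ∪ (c₁ ∩ x)` satisfies `p(a) = p(b) = b`
iff `b \ a ⊆ c₀ ⊆ b` and `b ⊆ c₁ ⊆ X`. -/
theorem stmt_5 {X : Type*} [TopologicalSpace X] (a b c₀ c₁ : Opens X)
    (hab : a < b) (hc : c₀ ≤ c₁) :
    (c₀ ⊔ (c₁ ⊓ a) = b ∧ c₀ ⊔ (c₁ ⊓ b) = b) ↔
      ((b : Set X) \ (a : Set X) ⊆ (c₀ : Set X) ∧ (c₀ : Set X) ⊆ (b : Set X) ∧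
        (b : Set X) ⊆ (c₁ : Set X) ∧ (c₁ : Set X) ⊆ Set.univ) := by
  have hab' : (a : Set X) ⊆ (b : Set X) := hab.le
  have hc' : (c₀ : Set X) ⊆ (c₁ : Set X) := hc
  constructor
  · rintro ⟨h1, h2⟩
    have h1' : (c₀ : Set X) ∪ ((c₁ : Set X) ∩ a) = b := by
      simpa using congrArg (fun u : Opens X => (u : Set X)) h1
    have h2' : (c₀ : Set X) ∪ ((c₁ : Set X) ∩ b) = b := by
      simpa using congrArg (fun u : Opens X => (u : Set X)) h2
    refine ⟨?_, ?_, ?_, Set.subset_univ _⟩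
    · rintro x ⟨hxb, hxa⟩
      rw [← h1'] at hxb
      rcases hxb with h | ⟨_, h⟩
      · exact h
      · exact absurd h hxa
    · intro x hx
      rw [← h2']; exact Or.inl hx
    · intro x hx
      rw [← h2'] at hx
      rcases hx with h | ⟨h, _⟩
      · exact hc' h
      · exact h
  · rintro ⟨hba, hcb, hbc, -⟩
    refine ⟨?_, ?_⟩ <;> (apply SetLike.coe_injective; simp only [Opens.coe_sup, Opens.coe_inf])
    · apply le_antisymm
      · rintro x (h | ⟨_, h⟩)
        · exact hcb h
        · exact hab' h
      · intro x hx
        by_cases hxa : x ∈ (a : Set X)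
        · exact Or.inr ⟨hbc hx, hxa⟩
        · exact Or.inl (hba ⟨hx, hxa⟩)
    · apply le_antisymm
      · rintro x (h | ⟨_, h⟩)
        · exact hcb h
        · exact h
      · intro x hx
        exact Or.inr ⟨hbc hx, hx⟩
end

section
/- (Lemma: iterated star condition) Let L be a distributive lattice, a_i < b_i elements of L for i ∈ [n], ê_I ∈ L^n the tuple with i-th component b_i if i ∈ I and a_i otherwise, and f defined on {ê_I : I ⊆ [n]}. Suppose f satisfies: f(ê_{I∪{k}}) ∧ a_k ≤ f(ê_I) ≤ f(ê_{I\{k}}) ∨ b_k for all I ⊆ [n] and k ∈ [n]. Then for all S ⊆ T ⊆ [n]: f(ê_T) ∧ ⋀_{k ∈ T\S} a_k ≤ f(ê_S) and f(ê_T) ≤ f(ê_S) ∨ ⋁_{k ∈ T\S} b_k. -/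
/-! Induction on `T \ S`: adding one element `k` to the difference costs one application
of (★), which contributes exactly one more factor `a k` to the meet (resp. `b k` to the join). -/

/-- The generalized characteristic vector `ê_I ∈ L^n`: `i`-th component is `b i` if
`i ∈ I` and `a i` otherwise. -/
def eVec {n : ℕ} {L : Type*} (a b : Fin n → L) (I : Finset (Fin n)) : Fin n → L :=
  fun i => if i ∈ I then b i else a i

namespace Finset

variable {α L : Type*} [DecidableEq α]

theorem fold_inf_le_of_forall_insert_inf_le [SemilatticeInf L] {g : Finset α → L} {c : α → L}
    (hstep : ∀ I k, k ∉ I → g (insert k I) ⊓ c k ≤ g I) (S D : Finset α) (hSD : Disjoint S D) :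
    D.fold (· ⊓ · : L → L → L) (g (S ∪ D)) c ≤ g S := by
  induction D using Finset.induction_on generalizing S with
  | empty => simp
  | insert k D hkD ih =>
    have hkS : k ∉ S := disjoint_right.mp hSD (mem_insert_self k D)
    have hSD' : Disjoint (insert k S) D :=
      disjoint_insert_left.mpr ⟨hkD, disjoint_of_subset_right (subset_insert k D) hSD⟩
    calc (insert k D).fold (· ⊓ · : L → L → L) (g (S ∪ insert k D)) c
        = c k ⊓ D.fold (· ⊓ · : L → L → L) (g (insert k S ∪ D)) c := by
          rw [fold_insert hkD, union_insert, insert_union]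
      _ ≤ c k ⊓ g (insert k S) := inf_le_inf_left _ (ih _ hSD')
      _ ≤ g S := inf_comm (c k) _ ▸ hstep S k hkS

theorem le_fold_sup_of_forall_insert_le_sup [SemilatticeSup L] {g : Finset α → L} {c : α → L}
    (hstep : ∀ I k, k ∉ I → g (insert k I) ≤ g I ⊔ c k) (S D : Finset α) (hSD : Disjoint S D) :
    g (S ∪ D) ≤ D.fold (· ⊔ · : L → L → L) (g S) c := by
  induction D using Finset.induction_on with
  | empty => simp
  | insert k D hkD ih =>
    have hk : k ∉ S ∪ D := notMem_union.mpr ⟨disjoint_right.mp hSD (mem_insert_self k D), hkD⟩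
    calc g (S ∪ insert k D)
        = g (insert k (S ∪ D)) := by rw [union_insert]
      _ ≤ g (S ∪ D) ⊔ c k := hstep _ k hk
      _ ≤ D.fold (· ⊔ · : L → L → L) (g S) c ⊔ c k :=
          sup_le_sup_right (ih (disjoint_of_subset_right (subset_insert k D) hSD)) _
      _ = (insert k D).fold (· ⊔ · : L → L → L) (g S) c := by rw [fold_insert hkD, sup_comm]

end Finset

theorem stmt_6_general {n : ℕ} {L : Type*} [DistribLattice L]
    (a b : Fin n → L)
    (f : (Fin n → L) → L)
    (hstar : ∀ (I : Finset (Fin n)) (k : Fin n),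
      f (eVec a b (insert k I)) ⊓ a k ≤ f (eVec a b I) ∧
        f (eVec a b I) ≤ f (eVec a b (I.erase k)) ⊔ b k) :
    ∀ S T : Finset (Fin n), S ⊆ T →
      ((T \ S).fold (· ⊓ ·) (f (eVec a b T)) a : L) ≤ f (eVec a b S) ∧
        f (eVec a b T) ≤ ((T \ S).fold (· ⊔ ·) (f (eVec a b S)) b : L) := by
  intro S T hST
  have hT : S ∪ (T \ S) = T := Finset.union_sdiff_of_subset hST
  have hdisj : Disjoint S (T \ S) := Finset.disjoint_sdiff
  constructor
  · have := Finset.fold_inf_le_of_forall_insert_inf_le (g := fun I => f (eVec a b I))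
      (fun I k _ => (hstar I k).1) S (T \ S) hdisj
    rwa [hT] at this
  · have := Finset.le_fold_sup_of_forall_insert_le_sup (g := fun I => f (eVec a b I))
      (fun I k hk => Finset.erase_insert hk ▸ (hstar (insert k I) k).2) S (T \ S) hdisj
    rwa [hT] at this

/-- iterated star: if `f` satisfies (★) on the cuboid vertices, then for
all `S ⊆ T`: `f(ê_T) ∧ ⋀_{k∈T\S} a_k ≤ f(ê_S)` and `f(ê_T) ≤ f(ê_S) ∨ ⋁_{k∈T\S} b_k`
(the possibly empty meets/joins are folded into `f(ê_T)` resp. `f(ê_S)`). -/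
theorem stmt_6 {n : ℕ} {L : Type*} [DistribLattice L]
    (a b : Fin n → L) (hab : ∀ i, a i < b i)
    (f : (Fin n → L) → L)
    (hstar : ∀ (I : Finset (Fin n)) (k : Fin n),
      f (eVec a b (insert k I)) ⊓ a k ≤ f (eVec a b I) ∧
        f (eVec a b I) ≤ f (eVec a b (I.erase k)) ⊔ b k) :
    ∀ S T : Finset (Fin n), S ⊆ T →
      ((T \ S).fold (· ⊓ ·) (f (eVec a b T)) a : L) ≤ f (eVec a b S) ∧
        f (eVec a b T) ≤ ((T \ S).fold (· ⊔ ·) (f (eVec a b S)) b : L) :=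
  stmt_6_general a b f hstar
end

section
/- (Necessity of star condition) Let L be a distributive lattice, a_i < b_i in L for i ∈ [n], and ê_I the vectors with i-th component b_i if i ∈ I, else a_i. If p: L^n → L is a lattice polynomial function and f = p restricted to D = {ê_I : I ⊆ [n]}, then f is monotone and satisfies condition (★): f(ê_{I∪{k}}) ∧ a_k ≤ f(ê_I) ≤ f(ê_{I\{k}}) ∨ b_k for all I ⊆ [n], k ∈ [n]. -/
/-- Lattice polynomial functions: compositions of `⊓`, `⊔`, projections and constants. -/
inductive IsLatticePoly {L : Type*} [Lattice L] {n : ℕ} : ((Fin n → L) → L) → Prop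
  | proj (i : Fin n) : IsLatticePoly (fun x => x i)
  | const (c : L) : IsLatticePoly (fun _ => c)
  | sup {p q : (Fin n → L) → L} :
      IsLatticePoly p → IsLatticePoly q → IsLatticePoly (fun x => p x ⊔ q x)
  | inf {p q : (Fin n → L) → L} :
      IsLatticePoly p → IsLatticePoly q → IsLatticePoly (fun x => p x ⊓ q x)

lemma latticePoly_mono {n : ℕ} {L : Type*} [Lattice L] {p : (Fin n → L) → L}
    (hp : IsLatticePoly p) : Monotone p := by
  induction hp with
  | proj i => exact fun x y h => h i
  | const c => exact fun _ _ _ => le_rfl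
  | sup _ _ ihp ihq => exact fun x y h => sup_le_sup (ihp h) (ihq h)
  | inf _ _ ihp ihq => exact fun x y h => inf_le_inf (ihp h) (ihq h)

/-- necessity of the star condition: the restriction of a lattice
polynomial function to the cuboid vertices `ê_I` is monotone and satisfies (★). -/
theorem stmt_8 {n : ℕ} {L : Type*} [DistribLattice L]
    (a b : Fin n → L) (hab : ∀ i, a i < b i)
    (p : (Fin n → L) → L) (hp : IsLatticePoly p) :
    (∀ I J : Finset (Fin n), I ⊆ J → p (eVec a b I) ≤ p (eVec a b J)) ∧
    (∀ (I : Finset (Fin n)) (k : Fin n),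
      p (eVec a b (insert k I)) ⊓ a k ≤ p (eVec a b I) ∧
        p (eVec a b I) ≤ p (eVec a b (I.erase k)) ⊔ b k) := by
  constructor
  · intro I J hIJ
    refine latticePoly_mono hp fun i => ?_
    unfold eVec
    by_cases hi : i ∈ I
    · simp [hi, hIJ hi]
    · by_cases hj : i ∈ J <;> simp [hi, hj, (hab i).le]
  · intro I k
    induction hp with
    | proj i =>
      constructor
      · by_cases h : i = k
        · subst h
          simp only [eVec, Finset.mem_insert, true_or, if_pos]
          by_cases hi : i ∈ I <;> simp [hi, (hab i).le]
        · have : eVec a b (insert k I) i = eVec a b I i := by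
            simp [eVec, Finset.mem_insert, h]
          show eVec a b (insert k I) i ⊓ a k ≤ eVec a b I i
          rw [this]; exact inf_le_left
      · by_cases h : i = k
        · subst h
          refine le_trans ?_ le_sup_right
          by_cases hi : i ∈ I <;> simp [eVec, hi, (hab i).le]
        · have : eVec a b (I.erase k) i = eVec a b I i := by
            simp [eVec, Finset.mem_erase, h]
          show eVec a b I i ≤ eVec a b (I.erase k) i ⊔ b k
          rw [this]; exact le_sup_left
    | const c => exact ⟨inf_le_left, le_sup_left⟩
    | sup _ _ ihp ihq =>
      obtain ⟨hp1, hp2⟩ := ihp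
      obtain ⟨hq1, hq2⟩ := ihq
      constructor
      · rw [inf_sup_right]
        exact sup_le (hp1.trans le_sup_left) (hq1.trans le_sup_right)
      · exact sup_le (hp2.trans (sup_le_sup_right le_sup_left _))
          (hq2.trans (sup_le_sup_right le_sup_right _))
    | inf _ _ ihp ihq =>
      obtain ⟨hp1, hp2⟩ := ihp
      obtain ⟨hq1, hq2⟩ := ihq
      constructor
      · exact le_inf ((inf_le_inf_right _ inf_le_left).trans hp1)
          ((inf_le_inf_right _ inf_le_right).trans hq1)
      · rw [sup_inf_right]
        exact le_inf (inf_le_left.trans hp2) (inf_le_right.trans hq2)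
end

section
/- (Main theorem, full characterization) Let L be a distributive lattice, a_i < b_i in L, D = {ê_I : I ⊆ [n]}, and f: D → L. There exists a lattice polynomial function p over L with p|_D = f if and only if f is monotone and satisfies (★): f(ê_{I∪{k}}) ∧ a_k ≤ f(ê_I) ≤ f(ê_{I\{k}}) ∨ b_k for all I ⊆ [n] and k ∈ [n]. -/
section Aux

variable {L : Type*} {n : ℕ}

lemma IsLatticePoly.monotone' [Lattice L] {p : (Fin n → L) → L} (h : IsLatticePoly p) :
    Monotone p := by
  induction h with
  | proj i => exact fun x y hxy => hxy i
  | const c => exact monotone_const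
  | sup _ _ ihp ihq => exact fun x y h => sup_le_sup (ihp h) (ihq h)
  | inf _ _ ihp ihq => exact fun x y h => inf_le_inf (ihp h) (ihq h)

lemma poly_star_left [DistribLattice L] {p : (Fin n → L) → L} (h : IsLatticePoly p)
    (x : Fin n → L) (k : Fin n) (u v : L) :
    p (Function.update x k v) ⊓ u ≤ p (Function.update x k u) := by
  induction h with
  | proj i =>
      by_cases hik : i = k
      · subst hik; simp
      · simp only [Function.update_apply, if_neg hik]; exact inf_le_left
  | const c => exact inf_le_left
  | sup _ _ ihp ihq =>
      rw [inf_sup_right]; exact sup_le_sup ihp ihq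
  | inf _ _ ihp ihq =>
      exact le_inf ((inf_le_inf_right _ inf_le_left).trans ihp)
        ((inf_le_inf_right _ inf_le_right).trans ihq)

lemma poly_star_right [DistribLattice L] {p : (Fin n → L) → L} (h : IsLatticePoly p)
    (x : Fin n → L) (k : Fin n) (u v : L) :
    p (Function.update x k v) ≤ p (Function.update x k u) ⊔ v := by
  induction h with
  | proj i =>
      by_cases hik : i = k
      · subst hik; simp
      · simp only [Function.update_apply, if_neg hik]; exact le_sup_left
  | const c => exact le_sup_left
  | sup _ _ ihp ihq =>
      exact sup_le (ihp.trans (sup_le_sup_right le_sup_left _))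
        (ihq.trans (sup_le_sup_right le_sup_right _))
  | inf _ _ ihp ihq =>
      rw [sup_inf_right]
      exact le_inf (inf_le_left.trans ihp) (inf_le_right.trans ihq)

lemma le_fold_inf [Lattice L] {α : Type*} [DecidableEq α] (s : Finset α) (c x : L) (g : α → L) :
    x ≤ s.fold (fun u v : L => u ⊓ v) c g ↔ x ≤ c ∧ ∀ i ∈ s, x ≤ g i := by
  induction s using Finset.induction_on with
  | empty => simp
  | @insert k s hk ih =>
      rw [Finset.fold_insert hk]
      simp only [le_inf_iff, ih, Finset.forall_mem_insert]
      tauto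

lemma poly_fold_inf [Lattice L] (s : Finset (Fin n)) (c : L) :
    IsLatticePoly (fun x : Fin n → L => s.fold (fun u v : L => u ⊓ v) c x) := by
  induction s using Finset.induction_on with
  | empty => simpa using IsLatticePoly.const c
  | @insert k s hk ih =>
      have e : (fun x : Fin n → L => (insert k s).fold (fun u v : L => u ⊓ v) c x) =
          fun x => x k ⊓ s.fold (fun u v : L => u ⊓ v) c x := by
        funext x; rw [Finset.fold_insert hk]
      rw [e]; exact .inf (.proj k) ih

lemma poly_sup' [Lattice L] {α : Type*} (s : Finset α) (hs : s.Nonempty)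
    (g : α → (Fin n → L) → L) (hg : ∀ i ∈ s, IsLatticePoly (g i)) :
    IsLatticePoly (fun x => s.sup' hs fun i => g i x) := by
  induction hs using Finset.Nonempty.cons_induction with
  | singleton a => simpa using hg a (by simp)
  | cons a s ha hs ih =>
      have e : (fun x => (Finset.cons a s ha).sup' (Finset.cons_nonempty ha) fun i => g i x) =
          fun x => g a x ⊔ s.sup' hs fun i => g i x := by
        funext x; rw [Finset.sup'_cons hs]
      rw [e]
      exact .sup (hg a (Finset.mem_cons_self a s))
        (ih fun i hi => hg i (Finset.mem_cons_of_mem hi))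

end Aux

section Key

variable {L : Type*} {n : ℕ} [DistribLattice L] (a b : Fin n → L) (f : (Fin n → L) → L)

/-- Iterated left (★): meeting `f(ê_I)` with the `a i` for `i ∈ S` drops below `f(ê_{I \ S})`. -/
lemma claimL
    (hsl : ∀ (I : Finset (Fin n)) (k : Fin n),
      f (eVec a b (insert k I)) ⊓ a k ≤ f (eVec a b I)) :
    ∀ S I : Finset (Fin n), S ⊆ I →
      S.fold (fun u v : L => u ⊓ v) (f (eVec a b I)) a ≤ f (eVec a b (I \ S)) := by
  intro S
  induction S using Finset.induction_on with
  | empty => intro I _; simp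
  | @insert k S hk ih =>
      intro I hSI
      rw [Finset.fold_insert hk]
      have hsub : S ⊆ I := (Finset.subset_insert k S).trans hSI
      have hkI : k ∈ I \ S :=
        Finset.mem_sdiff.2 ⟨hSI (Finset.mem_insert_self k S), hk⟩
      have h2 : f (eVec a b (I \ S)) ⊓ a k ≤ f (eVec a b ((I \ S).erase k)) := by
        have := hsl ((I \ S).erase k) k
        rwa [Finset.insert_erase hkI] at this
      have e : I \ insert k S = (I \ S).erase k := by
        ext i
        simp only [Finset.mem_sdiff, Finset.mem_erase, Finset.mem_insert]
        tauto
      rw [e]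
      calc a k ⊓ S.fold (fun u v : L => u ⊓ v) (f (eVec a b I)) a
          ≤ f (eVec a b (I \ S)) ⊓ a k := by
            rw [inf_comm]; exact inf_le_inf_right _ (ih I hsub)
        _ ≤ _ := h2

/-- Iterated right (★): the key lower-bound claim, by induction on `J.card + (J \ S).card`. -/
lemma claimR
    (hmono : ∀ I J : Finset (Fin n), I ⊆ J → f (eVec a b I) ≤ f (eVec a b J))
    (hsr : ∀ (I : Finset (Fin n)) (k : Fin n),
      f (eVec a b I) ≤ f (eVec a b (I.erase k)) ⊔ b k) :
    ∀ (m : ℕ) (J S : Finset (Fin n)), S ⊆ J → J.card + (J \ S).card ≤ m →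
      S.fold (fun u v : L => u ⊓ v) (f (eVec a b J)) b ≤
        J.powerset.sup' ⟨∅, Finset.empty_mem_powerset J⟩
          (fun I => I.fold (fun u v : L => u ⊓ v) (f (eVec a b I)) b) := by
  intro m
  induction m with
  | zero =>
      intro J S hSJ hc
      have hJ : J = ∅ := Finset.card_eq_zero.1 (Nat.le_zero.1 hc |> fun h => by omega)
      have hS : S = ∅ := Finset.subset_empty.1 (hJ ▸ hSJ)
      subst hJ; subst hS
      simpa using Finset.le_sup' (fun I => I.fold (fun u v : L => u ⊓ v) (f (eVec a b I)) b)
        (Finset.empty_mem_powerset (∅ : Finset (Fin n)))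
  | succ m ihm =>
      intro J S hSJ hc
      by_cases hSJ' : S = J
      · subst hSJ'
        exact Finset.le_sup' (fun I => I.fold (fun u v : L => u ⊓ v) (f (eVec a b I)) b)
          (Finset.mem_powerset.2 (Finset.Subset.refl S))
      · obtain ⟨k, hkJ, hkS⟩ := Finset.exists_of_ssubset (hSJ.ssubset_of_ne hSJ')
        set F := S.fold (fun u v : L => u ⊓ v) (f (eVec a b J)) b with hF
        have hF_le_f : F ≤ f (eVec a b J) := ((le_fold_inf S _ F b).1 le_rfl).1
        have hF_le_b : ∀ i ∈ S, F ≤ b i := ((le_fold_inf S _ F b).1 le_rfl).2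
        have key : F ≤ f (eVec a b (J.erase k)) ⊔ b k := hF_le_f.trans (hsr J k)
        have hkJS : k ∈ J \ S := Finset.mem_sdiff.2 ⟨hkJ, hkS⟩
        -- branch 1 : F ⊓ f(ê_{J.erase k}) handled by recursion on J.erase k
        have branch1 : F ⊓ f (eVec a b (J.erase k)) ≤
            J.powerset.sup' ⟨∅, Finset.empty_mem_powerset J⟩
              (fun I => I.fold (fun u v : L => u ⊓ v) (f (eVec a b I)) b) := by
          have h1 : F ⊓ f (eVec a b (J.erase k)) ≤
              S.fold (fun u v : L => u ⊓ v) (f (eVec a b (J.erase k))) b :=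
            (le_fold_inf S _ _ b).2
              ⟨inf_le_right, fun i hi => inf_le_left.trans (hF_le_b i hi)⟩
          have hsub : S ⊆ J.erase k := Finset.subset_erase.2 ⟨hSJ, hkS⟩
          have hcard : (J.erase k).card + ((J.erase k) \ S).card ≤ m := by
            have e : (J.erase k) \ S = (J \ S).erase k := by
              ext i
              simp only [Finset.mem_sdiff, Finset.mem_erase]
              tauto
            have c1 : (J.erase k).card = J.card - 1 := Finset.card_erase_of_mem hkJ
            have c2 : ((J.erase k) \ S).card = (J \ S).card - 1 := by
              rw [e]; exact Finset.card_erase_of_mem hkJS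
            have p1 : 0 < J.card := Finset.card_pos.2 ⟨k, hkJ⟩
            have p2 : 0 < (J \ S).card := Finset.card_pos.2 ⟨k, hkJS⟩
            omega
          have h2 := ihm (J.erase k) S hsub hcard
          refine (h1.trans h2).trans (Finset.sup'_le _ _ fun I hI => ?_)
          exact Finset.le_sup' (fun I => I.fold (fun u v : L => u ⊓ v) (f (eVec a b I)) b)
            (Finset.mem_powerset.2 ((Finset.mem_powerset.1 hI).trans (Finset.erase_subset k J)))
        -- branch 2 : F ⊓ b k handled by recursion on insert k S
        have branch2 : F ⊓ b k ≤
            J.powerset.sup' ⟨∅, Finset.empty_mem_powerset J⟩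
              (fun I => I.fold (fun u v : L => u ⊓ v) (f (eVec a b I)) b) := by
          have h1 : F ⊓ b k ≤ (insert k S).fold (fun u v : L => u ⊓ v) (f (eVec a b J)) b := by
            refine (le_fold_inf (insert k S) _ _ b).2
              ⟨inf_le_left.trans hF_le_f, fun i hi => ?_⟩
            rcases Finset.mem_insert.1 hi with h | h
            · subst h; exact inf_le_right
            · exact inf_le_left.trans (hF_le_b i h)
          have hsub : insert k S ⊆ J := Finset.insert_subset hkJ hSJ
          have hcard : J.card + (J \ insert k S).card ≤ m := by
            have e : J \ insert k S = (J \ S).erase k := by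
              ext i
              simp only [Finset.mem_sdiff, Finset.mem_erase, Finset.mem_insert]
              tauto
            have c2 : (J \ insert k S).card = (J \ S).card - 1 := by
              rw [e]; exact Finset.card_erase_of_mem hkJS
            have p2 : 0 < (J \ S).card := Finset.card_pos.2 ⟨k, hkJS⟩
            omega
          exact h1.trans (ihm J (insert k S) hsub hcard)
        calc F = F ⊓ (f (eVec a b (J.erase k)) ⊔ b k) := (inf_eq_left.2 key).symm
          _ = F ⊓ f (eVec a b (J.erase k)) ⊔ F ⊓ b k := inf_sup_left _ _ _
          _ ≤ _ := sup_le branch1 branch2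

end Key



/-- main theorem: a function `f` on the cuboid vertices
`D = {ê_I : I ⊆ [n]}` extends to a lattice polynomial function over `L` if and only if
`f` is monotone and satisfies (★). -/
theorem stmt_15 {n : ℕ} {L : Type*} [DistribLattice L]
    (a b : Fin n → L) (hab : ∀ i, a i < b i)
    (f : (Fin n → L) → L) :
    (∃ p : (Fin n → L) → L, IsLatticePoly p ∧
        ∀ I : Finset (Fin n), p (eVec a b I) = f (eVec a b I)) ↔
      ((∀ I J : Finset (Fin n), I ⊆ J → f (eVec a b I) ≤ f (eVec a b J)) ∧
        (∀ (I : Finset (Fin n)) (k : Fin n),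
          f (eVec a b (insert k I)) ⊓ a k ≤ f (eVec a b I) ∧
            f (eVec a b I) ≤ f (eVec a b (I.erase k)) ⊔ b k)) := by
  constructor
  · rintro ⟨p, hp, hpf⟩
    constructor
    · intro I J hIJ
      rw [← hpf I, ← hpf J]
      apply hp.monotone'
      intro i
      by_cases hiI : i ∈ I
      · simp [eVec, hiI, hIJ hiI]
      · by_cases hiJ : i ∈ J
        · simpa [eVec, hiI, hiJ] using (hab i).le
        · simp [eVec, hiI, hiJ]
    · intro I k
      constructor
      · by_cases hkI : k ∈ I
        · rw [Finset.insert_eq_self.2 hkI]; exact inf_le_left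
        · rw [← hpf I, ← hpf (insert k I)]
          have e1 : eVec a b (insert k I) = Function.update (eVec a b I) k (b k) := by
            funext i
            by_cases hik : i = k
            · subst hik; simp [eVec]
            · simp [eVec, Function.update_apply, hik]
          have e2 : eVec a b I = Function.update (eVec a b I) k (a k) := by
            funext i
            by_cases hik : i = k
            · subst hik; simp [eVec, hkI]
            · simp [Function.update_apply, hik]
          rw [e1]; conv_rhs => rw [e2]
          exact poly_star_left hp _ k (a k) (b k)
      · by_cases hkI : k ∈ I
        · rw [← hpf I, ← hpf (I.erase k)]
          have e1 : eVec a b I = Function.update (eVec a b (I.erase k)) k (b k) := by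
            funext i
            by_cases hik : i = k
            · subst hik; simp [eVec, hkI]
            · simp [eVec, Function.update_apply, hik, Finset.mem_erase]
          have e2 : eVec a b (I.erase k) = Function.update (eVec a b (I.erase k)) k (a k) := by
            funext i
            by_cases hik : i = k
            · subst hik; simp [eVec]
            · simp [Function.update_apply, hik]
          rw [e1]; conv_rhs => rw [e2]
          exact poly_star_right hp _ k (a k) (b k)
        · rw [Finset.erase_eq_of_notMem hkI]; exact le_sup_left
  · rintro ⟨hmono, hstar⟩
    refine ⟨fun x => (Finset.univ.powerset).sup' ⟨∅, Finset.empty_mem_powerset _⟩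
        (fun I => I.fold (fun u v : L => u ⊓ v) (f (eVec a b I)) x), ?_, ?_⟩
    · exact poly_sup' _ _ _ (fun I _ => poly_fold_inf I _)
    · intro J
      apply le_antisymm
      · refine Finset.sup'_le _ _ fun I _ => ?_
        have h1 : I.fold (fun u v : L => u ⊓ v) (f (eVec a b I)) (eVec a b J) ≤
            (I \ J).fold (fun u v : L => u ⊓ v) (f (eVec a b I)) (eVec a b J) := by
          refine (le_fold_inf _ _ _ _).2 ⟨((le_fold_inf _ _ _ _).1 le_rfl).1, fun i hi => ?_⟩
          exact ((le_fold_inf _ _ _ _).1 le_rfl).2 i (Finset.sdiff_subset hi)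
        have h2 : (I \ J).fold (fun u v : L => u ⊓ v) (f (eVec a b I)) (eVec a b J) =
            (I \ J).fold (fun u v : L => u ⊓ v) (f (eVec a b I)) a := by
          refine Finset.fold_congr fun i hi => ?_
          have hiJ : i ∉ J := (Finset.mem_sdiff.1 hi).2
          simp [eVec, hiJ]
        have h3 := claimL a b f (fun I k => (hstar I k).1) (I \ J) I Finset.sdiff_subset
        rw [Finset.sdiff_sdiff_self_left] at h3
        exact h1.trans (h2 ▸ (h3.trans (hmono _ _ Finset.inter_subset_right)))
      · have h0 := claimR a b f hmono (fun I k => (hstar I k).2)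
          (J.card + (J \ ∅).card) J ∅ (Finset.empty_subset J) le_rfl
        rw [Finset.fold_empty] at h0
        refine h0.trans (Finset.sup'_le _ _ fun I hI => ?_)
        have hIJ : I ⊆ J := Finset.mem_powerset.1 hI
        have e : I.fold (fun u v : L => u ⊓ v) (f (eVec a b I)) b =
            I.fold (fun u v : L => u ⊓ v) (f (eVec a b I)) (eVec a b J) := by
          refine Finset.fold_congr fun i hi => ?_
          simp [eVec, hIJ hi]
        rw [e]
        exact Finset.le_sup'
          (fun I => I.fold (fun u v : L => u ⊓ v) (f (eVec a b I)) (eVec a b J))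
          (Finset.mem_powerset.2 (Finset.subset_univ I))
end

section
/- (Rico–Grabisch condition implies star on cuboids) Let L be a distributive lattice, a_i < b_i in L, D = {ê_I : I ⊆ [n]}, and f: D → L monotone. Suppose f satisfies condition (RG): for all ê_S, ê_T ∈ D with f(ê_S) < f(ê_T), there exists i ∈ [n] with (ê_S)_i ≤ f(ê_S) < f(ê_T) ≤ (ê_T)_i. Then f satisfies condition (★), and hence extends to a lattice polynomial function over L. -/
section Aux

variable {n : ℕ} {L : Type*} [DistribLattice L]

/-- sup' of lattice polynomials is a lattice polynomial. -/
lemma lp_sup' {ι : Type*} {s : Finset ι} (hs : s.Nonempty) (g : ι → (Fin n → L) → L)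
    (h : ∀ i ∈ s, IsLatticePoly (g i)) :
    IsLatticePoly (fun x => s.sup' hs fun i => g i x) := by
  induction hs using Finset.Nonempty.cons_induction with
  | singleton a => simp only [Finset.sup'_singleton]; exact h a (by simp)
  | cons a s ha hs ih =>
      simp only [Finset.sup'_cons hs]
      exact (h a (by simp)).sup (ih fun i hi => h i (by simp [hi]))

/-- inf' of lattice polynomials is a lattice polynomial. -/
lemma lp_inf' {ι : Type*} {s : Finset ι} (hs : s.Nonempty) (g : ι → (Fin n → L) → L)
    (h : ∀ i ∈ s, IsLatticePoly (g i)) :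
    IsLatticePoly (fun x => s.inf' hs fun i => g i x) := by
  induction hs using Finset.Nonempty.cons_induction with
  | singleton a => simp only [Finset.inf'_singleton]; exact h a (by simp)
  | cons a s ha hs ih =>
      simp only [Finset.inf'_cons hs]
      exact (h a (by simp)).inf (ih fun i hi => h i (by simp [hi]))

lemma inf'_mono_fun' {ι : Type*} {s : Finset ι} (hs : s.Nonempty) {g h : ι → L}
    (H : ∀ i ∈ s, g i ≤ h i) : s.inf' hs g ≤ s.inf' hs h :=
  Finset.le_inf' hs _ fun c hc => le_trans (Finset.inf'_le _ hc) (H c hc)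

variable (a b : Fin n → L)
variable (f : (Fin n → L) → L)
variable (hmono : ∀ I J : Finset (Fin n), I ⊆ J → f (eVec a b I) ≤ f (eVec a b J))
variable (hRG : ∀ S T : Finset (Fin n), f (eVec a b S) < f (eVec a b T) →
      ∃ i : Fin n, eVec a b S i ≤ f (eVec a b S) ∧ f (eVec a b T) ≤ eVec a b T i)

include hmono hRG

/-- First half of (★). -/
lemma star1 (I : Finset (Fin n)) (k : Fin n) :
    f (eVec a b (insert k I)) ⊓ a k ≤ f (eVec a b I) := by
  by_cases hk : k ∈ I
  · rw [Finset.insert_eq_self.2 hk]; exact inf_le_left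
  rcases eq_or_lt_of_le (hmono I (insert k I) (Finset.subset_insert k I)) with heq | hlt
  · rw [← heq]; exact inf_le_left
  obtain ⟨i, h1, h2⟩ := hRG I (insert k I) hlt
  have hik : i = k := by
    by_contra hne
    have he : eVec a b I i = eVec a b (insert k I) i := by
      simp [eVec, Finset.mem_insert, hne]
    exact absurd (lt_of_le_of_lt (h2.trans (he ▸ h1)) hlt) (lt_irrefl _)
  subst hik
  have ha : a i ≤ f (eVec a b I) := by simpa [eVec, hk] using h1
  exact inf_le_right.trans ha

/-- Second half of (★). -/
lemma star2 (I : Finset (Fin n)) (k : Fin n) :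
    f (eVec a b I) ≤ f (eVec a b (I.erase k)) ⊔ b k := by
  by_cases hk : k ∈ I
  · rcases eq_or_lt_of_le (hmono (I.erase k) I (Finset.erase_subset k I)) with heq | hlt
    · rw [heq]; exact le_sup_left
    obtain ⟨i, h1, h2⟩ := hRG (I.erase k) I hlt
    have hik : i = k := by
      by_contra hne
      have he : eVec a b (I.erase k) i = eVec a b I i := by
        simp [eVec, Finset.mem_erase, hne]
      exact absurd (lt_of_le_of_lt (h2.trans (he ▸ h1)) hlt) (lt_irrefl _)
    subst hik
    have hb : f (eVec a b I) ≤ b i := by simpa [eVec, hk] using h2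
    exact hb.trans le_sup_right
  · rw [Finset.erase_eq_of_notMem hk]; exact le_sup_left

/-- One-step version of `star1` for arbitrary `I`. -/
lemma star1' (I : Finset (Fin n)) (k : Fin n) :
    f (eVec a b I) ⊓ a k ≤ f (eVec a b (I.erase k)) := by
  have h1 : f (eVec a b I) ≤ f (eVec a b (insert k (I.erase k))) := by
    apply hmono
    intro x hx
    by_cases hxk : x = k
    · subst hxk; exact Finset.mem_insert_self _ _
    · exact Finset.mem_insert_of_mem (Finset.mem_erase.2 ⟨hxk, hx⟩)
  calc f (eVec a b I) ⊓ a k ≤ f (eVec a b (insert k (I.erase k))) ⊓ a k :=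
        inf_le_inf_right _ h1
    _ ≤ f (eVec a b (I.erase k)) := star1 a b f hmono hRG _ k

/-- Iterated first half: meeting with `a` over `K` drops down to `I \ K`. -/
lemma inf_a_le (K : Finset (Fin n)) (hK : K.Nonempty) (I : Finset (Fin n)) :
    f (eVec a b I) ⊓ K.inf' hK a ≤ f (eVec a b (I \ K)) := by
  induction hK using Finset.Nonempty.cons_induction generalizing I with
  | singleton k =>
      simp only [Finset.inf'_singleton]
      rw [← Finset.erase_eq]
      exact star1' a b f hmono hRG I k
  | cons k K hk hKne ih =>
      rw [Finset.inf'_cons hKne]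
      have key : (I.erase k) \ K = I \ (Finset.cons k K hk) := by
        ext x
        simp only [Finset.mem_sdiff, Finset.mem_erase, Finset.mem_cons]
        tauto
      calc f (eVec a b I) ⊓ (a k ⊓ K.inf' hKne a)
          = (f (eVec a b I) ⊓ a k) ⊓ K.inf' hKne a := by rw [inf_assoc]
        _ ≤ f (eVec a b (I.erase k)) ⊓ K.inf' hKne a :=
            inf_le_inf_right _ (star1' a b f hmono hRG I k)
        _ ≤ f (eVec a b ((I.erase k) \ K)) := ih (I.erase k)
        _ = f (eVec a b (I \ Finset.cons k K hk)) := by rw [key]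

/-- Iterated second half (distributed form). -/
lemma sup_b_ge (J : Finset (Fin n)) (K : Finset (Fin n)) (hK : K.Nonempty) :
    f (eVec a b J) ≤ (f (eVec a b J) ⊓ K.inf' hK b) ⊔
      K.sup' hK (fun k => f (eVec a b (J.erase k))) := by
  have hsingle : ∀ k : Fin n,
      f (eVec a b J) ≤ (f (eVec a b J) ⊓ b k) ⊔ f (eVec a b (J.erase k)) := by
    intro k
    have h := star2 a b f hmono hRG J k
    calc f (eVec a b J) = f (eVec a b J) ⊓ (f (eVec a b (J.erase k)) ⊔ b k) :=
          (inf_eq_left.2 h).symm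
      _ = (f (eVec a b J) ⊓ f (eVec a b (J.erase k))) ⊔ (f (eVec a b J) ⊓ b k) :=
          inf_sup_left _ _ _
      _ ≤ (f (eVec a b J) ⊓ b k) ⊔ f (eVec a b (J.erase k)) :=
          sup_le (inf_le_right.trans le_sup_right) le_sup_left
  induction hK using Finset.Nonempty.cons_induction with
  | singleton k =>
      simp only [Finset.inf'_singleton, Finset.sup'_singleton]
      exact hsingle k
  | cons k K hk hKne ih =>
      rw [Finset.inf'_cons hKne, Finset.sup'_cons hKne]
      set F := f (eVec a b J) with hF
      set A := K.inf' hKne b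
      set S := K.sup' hKne (fun k => f (eVec a b (J.erase k)))
      set E := f (eVec a b (J.erase k))
      have h2 : F ≤ ((F ⊓ A) ⊔ S) ⊓ ((F ⊓ b k) ⊔ E) := le_inf ih (hsingle k)
      refine h2.trans ?_
      calc ((F ⊓ A) ⊔ S) ⊓ ((F ⊓ b k) ⊔ E)
          = ((F ⊓ A) ⊓ ((F ⊓ b k) ⊔ E)) ⊔ (S ⊓ ((F ⊓ b k) ⊔ E)) := inf_sup_right _ _ _
        _ ≤ (((F ⊓ A) ⊓ (F ⊓ b k)) ⊔ ((F ⊓ A) ⊓ E)) ⊔ S := by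
            apply sup_le
            · rw [inf_sup_left]
              exact le_sup_left
            · exact inf_le_left.trans le_sup_right
        _ ≤ (F ⊓ (b k ⊓ A)) ⊔ (E ⊔ S) := by
            apply sup_le
            apply sup_le
            · apply le_sup_of_le_left
              refine le_inf (inf_le_left.trans inf_le_left) (le_inf ?_ ?_)
              · exact inf_le_right.trans inf_le_right
              · exact inf_le_left.trans inf_le_right
            · exact inf_le_right.trans (le_sup_of_le_right le_sup_left)
            · exact le_sup_of_le_right le_sup_right

end Aux

section Main

variable {n : ℕ} {L : Type*} [DistribLattice L]
variable (a b : Fin n → L) (hab : ∀ i, a i < b i)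
variable (f : (Fin n → L) → L)

/-- The DNF term for `I`. -/
noncomputable def dnfTerm (I : Finset (Fin n)) : (Fin n → L) → L :=
  fun x => if h : I.Nonempty then f (eVec a b I) ⊓ I.inf' h x else f (eVec a b ∅)

/-- The DNF polynomial. -/
noncomputable def dnfPoly : (Fin n → L) → L :=
  fun x => (Finset.univ : Finset (Finset (Fin n))).sup' Finset.univ_nonempty
    (fun I => dnfTerm a b f I x)

lemma dnfPoly_isLatticePoly : IsLatticePoly (dnfPoly a b f) := by
  apply lp_sup'
  intro I _
  unfold dnfTerm
  by_cases hI : I.Nonempty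
  · simp only [dif_pos hI]
    exact (IsLatticePoly.const _).inf (lp_inf' hI (fun i x => x i) fun i _ => .proj i)
  · simp only [dif_neg hI]
    exact .const _

include hab in
lemma eVec_mono {J' J : Finset (Fin n)} (h : J' ⊆ J) (i : Fin n) :
    eVec a b J' i ≤ eVec a b J i := by
  unfold eVec
  by_cases h1 : i ∈ J'
  · simp [h1, h h1]
  · by_cases h2 : i ∈ J
    · simp [h1, h2, (hab i).le]
    · simp [h1, h2]

include hab in
lemma dnfTerm_mono {J' J : Finset (Fin n)} (h : J' ⊆ J) (I : Finset (Fin n)) :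
    dnfTerm a b f I (eVec a b J') ≤ dnfTerm a b f I (eVec a b J) := by
  unfold dnfTerm
  by_cases hI : I.Nonempty
  · simp only [dif_pos hI]
    exact inf_le_inf_left _ (inf'_mono_fun' hI fun i _ => eVec_mono a b hab h i)
  · simp only [dif_neg hI]; exact le_rfl

include hab in
lemma dnfPoly_mono {J' J : Finset (Fin n)} (h : J' ⊆ J) :
    dnfPoly a b f (eVec a b J') ≤ dnfPoly a b f (eVec a b J) := by
  apply Finset.sup'_le
  intro I _
  exact (dnfTerm_mono a b hab f h I).trans
    (Finset.le_sup' (fun I => dnfTerm a b f I (eVec a b J)) (Finset.mem_univ I))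

variable (hmono : ∀ I J : Finset (Fin n), I ⊆ J → f (eVec a b I) ≤ f (eVec a b J))
variable (hRG : ∀ S T : Finset (Fin n), f (eVec a b S) < f (eVec a b T) →
      ∃ i : Fin n, eVec a b S i ≤ f (eVec a b S) ∧ f (eVec a b T) ≤ eVec a b T i)

include hmono hRG

lemma dnfTerm_le (J I : Finset (Fin n)) :
    dnfTerm a b f I (eVec a b J) ≤ f (eVec a b J) := by
  unfold dnfTerm
  by_cases hI : I.Nonempty
  · simp only [dif_pos hI]
    by_cases hIJ : I ⊆ J
    · exact inf_le_left.trans (hmono I J hIJ)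
    · have hK : (I \ J).Nonempty := by
        rw [Finset.sdiff_nonempty]; exact hIJ
      have h1 : I.inf' hI (eVec a b J) ≤ (I \ J).inf' hK (eVec a b J) :=
        Finset.inf'_mono _ Finset.sdiff_subset hK
      have h2 : (I \ J).inf' hK (eVec a b J) = (I \ J).inf' hK a := by
        apply Finset.inf'_congr _ rfl
        intro k hk
        have : k ∉ J := (Finset.mem_sdiff.1 hk).2
        simp [eVec, this]
      calc f (eVec a b I) ⊓ I.inf' hI (eVec a b J)
          ≤ f (eVec a b I) ⊓ (I \ J).inf' hK a := by
            rw [← h2]; exact inf_le_inf_left _ h1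
        _ ≤ f (eVec a b (I \ (I \ J))) := inf_a_le a b f hmono hRG _ hK I
        _ ≤ f (eVec a b J) := by
            apply hmono
            rw [Finset.sdiff_sdiff_self_left]
            exact Finset.inter_subset_right
  · simp only [dif_neg hI]
    exact hmono ∅ J (Finset.empty_subset J)

include hab in
lemma f_le_dnfPoly (J : Finset (Fin n)) :
    f (eVec a b J) ≤ dnfPoly a b f (eVec a b J) := by
  induction J using Finset.strongInduction with
  | _ J ih =>
    rcases J.eq_empty_or_nonempty with rfl | hJ
    · have h0 : dnfTerm a b f ∅ (eVec a b ∅) = f (eVec a b ∅) := by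
        unfold dnfTerm
        simp
      exact h0 ▸ Finset.le_sup' (fun I => dnfTerm a b f I (eVec a b ∅)) (Finset.mem_univ ∅)
    · refine (sup_b_ge a b f hmono hRG J J hJ).trans (sup_le ?_ ?_)
      · have h1 : f (eVec a b J) ⊓ J.inf' hJ b = dnfTerm a b f J (eVec a b J) := by
          unfold dnfTerm
          rw [dif_pos hJ]
          congr 1
          apply Finset.inf'_congr _ rfl
          intro i hi
          simp [eVec, hi]
        exact h1 ▸ Finset.le_sup' (fun I => dnfTerm a b f I (eVec a b J)) (Finset.mem_univ J)
      · apply Finset.sup'_le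
        intro k hk
        have hss : J.erase k ⊂ J := Finset.erase_ssubset hk
        exact (ih _ hss).trans (dnfPoly_mono a b hab f (Finset.erase_subset k J))

include hab in
lemma dnfPoly_eval (J : Finset (Fin n)) :
    dnfPoly a b f (eVec a b J) = f (eVec a b J) :=
  le_antisymm (Finset.sup'_le _ _ fun I _ => dnfTerm_le a b f hmono hRG J I)
    (f_le_dnfPoly a b hab f hmono hRG J)

end Main

/-- Rico–Grabisch condition implies (★) on cuboids: if `f` defined on
`D = {ê_I}` is monotone and satisfies (RG): `f(ê_S) < f(ê_T)` implies
`∃ i, (ê_S)_i ≤ f(ê_S) < f(ê_T) ≤ (ê_T)_i`, then `f` satisfies (★), and hence extends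
to a lattice polynomial function over `L`. -/
theorem stmt_18 {n : ℕ} {L : Type*} [DistribLattice L]
    (a b : Fin n → L) (hab : ∀ i, a i < b i)
    (f : (Fin n → L) → L)
    (hmono : ∀ I J : Finset (Fin n), I ⊆ J → f (eVec a b I) ≤ f (eVec a b J))
    (hRG : ∀ S T : Finset (Fin n), f (eVec a b S) < f (eVec a b T) →
      ∃ i : Fin n, eVec a b S i ≤ f (eVec a b S) ∧ f (eVec a b T) ≤ eVec a b T i) :
    (∀ (I : Finset (Fin n)) (k : Fin n),
      f (eVec a b (insert k I)) ⊓ a k ≤ f (eVec a b I) ∧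
        f (eVec a b I) ≤ f (eVec a b (I.erase k)) ⊔ b k) ∧
    (∃ p : (Fin n → L) → L, IsLatticePoly p ∧
      ∀ I : Finset (Fin n), p (eVec a b I) = f (eVec a b I)) := by
  refine ⟨fun I k => ⟨star1 a b f hmono hRG I k, star2 a b f hmono hRG I k⟩,
    dnfPoly a b f, dnfPoly_isLatticePoly a b f,
    fun I => dnfPoly_eval a b hab f hmono hRG I⟩
end

section
/- (Counterexample: RG neither sufficient nor necessary off chains) Let L = {0, a, b, 1} be the four-element distributive lattice with 0 < a, b < 1 and a, b incomparable. Define f, g on D = {0, b} ⊆ L by f(0) = b, f(b) = a and g(0) = a, g(b) = 1. Then: (1) f vacuously satisfies condition (RG) but is not monotone, hence is not the restriction of any unary lattice polynomial function; (2) g fails condition (RG), yet g is the restriction of the polynomial function p(x) = x ∨ a to D. -/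
/-- The diamond distributive lattice `M₂ = {0, a, b, 1}` with `a, b` incomparable,
realized as `Bool × Bool` with componentwise order: `0 = ⊥ = (false, false)`,
`a = (true, false)`, `b = (false, true)`, `1 = ⊤ = (true, true)`. -/
abbrev Diamond : Type := Bool × Bool

/-- Unary lattice polynomial functions: compositions of `⊓`, `⊔`, the identity
(projection) and constants. -/
inductive IsLatticePoly1 {L : Type*} [Lattice L] : (L → L) → Prop
  | proj : IsLatticePoly1 (fun x => x)
  | const (c : L) : IsLatticePoly1 (fun _ => c)
  | sup {p q : L → L} :
      IsLatticePoly1 p → IsLatticePoly1 q → IsLatticePoly1 (fun x => p x ⊔ q x)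
  | inf {p q : L → L} :
      IsLatticePoly1 p → IsLatticePoly1 q → IsLatticePoly1 (fun x => p x ⊓ q x)

/-- Condition (RG) for a unary function `h` on a two-element domain `{u₀, u₁}`. -/
def RGcond {L : Type*} [Lattice L] (D : Set L) (h : L → L) : Prop :=
  ∀ u ∈ D, ∀ v ∈ D, h u < h v → u ≤ h u ∧ h v ≤ v

lemma poly_monotone {L : Type*} [Lattice L] {p : L → L}
    (h : IsLatticePoly1 p) : Monotone p := by
  induction h with
  | proj => exact monotone_id
  | const c => exact monotone_const
  | sup _ _ ihp ihq => exact fun x y hxy => sup_le_sup (ihp hxy) (ihq hxy)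
  | inf _ _ ihp ihq => exact fun x y hxy => inf_le_inf (ihp hxy) (ihq hxy)

/-- in the diamond lattice with `a = (true,false)`, `b = (false,true)`,
`D = {0, b}`: the function `f` with `f(0) = b`, `f(b) = a` vacuously satisfies (RG) but
is not monotone and is not the restriction of any unary lattice polynomial function;
the function `g` with `g(0) = a`, `g(b) = 1` fails (RG) yet is the restriction of the
polynomial function `p(x) = x ∨ a`. -/
theorem stmt_19
    (va vb : Diamond) (hva : va = (true, false)) (hvb : vb = (false, true))
    (f g : Diamond → Diamond)
    (hf0 : f ⊥ = vb) (hfb : f vb = va) (hg0 : g ⊥ = va) (hgb : g vb = ⊤) :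
    -- the lattice facts: 0 < a, b < 1 and a, b incomparable
    ((⊥ : Diamond) < va ∧ (⊥ : Diamond) < vb ∧ va < ⊤ ∧ vb < ⊤ ∧
      ¬ va ≤ vb ∧ ¬ vb ≤ va ∧ va ⊓ vb = ⊥ ∧ va ⊔ vb = ⊤) ∧
    -- (1) f satisfies (RG), is not monotone, hence extends to no polynomial function
    (RGcond {⊥, vb} f ∧ ¬ f ⊥ ≤ f vb ∧
      ¬ ∃ p : Diamond → Diamond, IsLatticePoly1 p ∧ p ⊥ = f ⊥ ∧ p vb = f vb) ∧
    -- (2) g fails (RG), yet g is the restriction of `p(x) = x ⊔ a` to `D`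
    (¬ RGcond {⊥, vb} g ∧
      IsLatticePoly1 (fun x : Diamond => x ⊔ va) ∧
      (⊥ : Diamond) ⊔ va = g ⊥ ∧ vb ⊔ va = g vb) := by
  subst hva hvb
  refine ⟨⟨lt_iff_le_not_ge.mpr ⟨by decide, by decide⟩, lt_iff_le_not_ge.mpr ⟨by decide, by decide⟩,
      lt_iff_le_not_ge.mpr ⟨by decide, by decide⟩, lt_iff_le_not_ge.mpr ⟨by decide, by decide⟩,
      by decide, by decide, by decide, by decide⟩,
    ⟨?_, ?_, ?_⟩, ?_, ?_, ?_, ?_⟩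
  · intro u hu v hv hlt
    rcases hu with rfl | hu <;> rcases hv with rfl | hv
    · exact absurd hlt (lt_irrefl _)
    · rw [Set.mem_singleton_iff] at hv; subst hv
      rw [hf0, hfb] at hlt; exact absurd hlt.le (by decide)
    · rw [Set.mem_singleton_iff] at hu; subst hu
      rw [hf0, hfb] at hlt; exact absurd hlt.le (by decide)
    · rw [Set.mem_singleton_iff] at hu hv; subst hu; subst hv
      exact absurd hlt (lt_irrefl _)
  · rw [hf0, hfb]; decide
  · rintro ⟨p, hp, h0, hb⟩
    have := poly_monotone hp (show (⊥ : Diamond) ≤ (false, true) by decide)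
    rw [h0, hb, hf0, hfb] at this
    exact absurd this (by decide)
  · intro h
    have := h ⊥ (Or.inl rfl) (false, true) (Or.inr rfl) (by rw [hg0, hgb]; exact lt_iff_le_not_ge.mpr ⟨by decide, by decide⟩)
    rw [hgb] at this
    exact absurd this.2 (by decide)
  · exact IsLatticePoly1.sup IsLatticePoly1.proj (IsLatticePoly1.const _)
  · rw [hg0]; decide
  · rw [hgb]; decide
end
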